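/- Let G be a finite group, H and N normal subgroups with H ∩ N = {e} and HN = G (a complementary pair), and let A be the direct product supercharacter theory of supercharacter theories A_H on H and A_N on N. Then A is generated by a subgroup of Aut(G) if and only if A_H is generated by a subgroup of Aut(H) and A_N is generated by a subgroup of Aut(N). -/

import Mathlib

/-- The sum `∑_{g ∈ K} g` in the group algebra `ℂ[G]`. -/
noncomputable def classSum {G : Type*} [Group G] [DecidableEq G] (K : Finset G) :
    MonoidAlgebra ℂ G := ∑ g ∈ K, MonoidAlgebra.single g 1

/-- The Hadamard (coefficientwise) product on `ℂ[G]`. -/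
noncomputable def hadamard {G : Type*} [Group G] (a b : MonoidAlgebra ℂ G) :
    MonoidAlgebra ℂ G :=
    MonoidAlgebra.ofCoeff (Finsupp.zipWith (· * ·) (mul_zero 0) a.coeff b.coeff)

/-- A supercharacter theory of a finite group `G`, identified with its superclass
partition `P`: a partition of `G` with `{1} ∈ P`, each part closed under conjugation
(so the part sums lie in `Z(ℂ[G])`), whose `ℂ`-span of part sums contains `Ĝ` and is
closed under the group-algebra product and the Hadamard product. -/
def IsSCT {G : Type*} [Group G] [Fintype G] [DecidableEq G] (P : Finset (Finset G)) : Prop :=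
  (∀ g : G, ∃! K, K ∈ P ∧ g ∈ K) ∧
  ({1} : Finset G) ∈ P ∧
  (∀ K ∈ P, ∀ g ∈ K, ∀ x : G, x * g * x⁻¹ ∈ K) ∧
  classSum (Finset.univ : Finset G) ∈
    Submodule.span ℂ (classSum '' (P : Set (Finset G))) ∧
  (∀ a ∈ Submodule.span ℂ (classSum '' (P : Set (Finset G))),
    ∀ b ∈ Submodule.span ℂ (classSum '' (P : Set (Finset G))),
      a * b ∈ Submodule.span ℂ (classSum '' (P : Set (Finset G)))) ∧
  (∀ a ∈ Submodule.span ℂ (classSum '' (P : Set (Finset G))),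
    ∀ b ∈ Submodule.span ℂ (classSum '' (P : Set (Finset G))),
      hadamard a b ∈ Submodule.span ℂ (classSum '' (P : Set (Finset G))))

/-- A supercharacter theory is generated by automorphisms if its superclasses are
exactly the orbits of a subgroup of `Aut(G)` acting on `G`. -/
def GenByAut {G : Type*} [Group G] [Fintype G] [DecidableEq G]
    (P : Finset (Finset G)) : Prop :=
  ∃ A : Subgroup (MulAut G), ∀ S : Finset G,
    S ∈ P ↔ ∃ g : G, (S : Set G) = MulAction.orbit A g

/-! Through the internal direct product `H × N ≃* G`, subgroups `A_H ≤ Aut H` and `A_N ≤ Aut N`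
give `A_H × A_N ≤ Aut (H × N)`, whose orbits are the products of an `A_H`-orbit and an
`A_N`-orbit. Conversely, if `A ≤ Aut G` generates `P`, the superclasses `K·{1}` and `{1}·L` are
`A`-orbits, so `A` preserves `H` and `N`, and its restrictions generate `P_H` and `P_N`. -/

section OrbitPartition

variable {X : Type*} [Group X]

theorem mem_orbit_mulAut_iff (A : Subgroup (MulAut X)) (x y : X) :
    y ∈ MulAction.orbit A x ↔ ∃ φ ∈ A, φ x = y :=
  ⟨fun ⟨φ, h⟩ => ⟨φ, φ.2, h⟩, fun ⟨φ, hφ, h⟩ => ⟨⟨φ, hφ⟩, h⟩⟩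

variable [Fintype X]

theorem exists_mem_coe_eq_orbit {P : Finset (Finset X)} {A : Subgroup (MulAut X)}
    (hA : ∀ S, S ∈ P ↔ ∃ x, (S : Set X) = MulAction.orbit A x) (x : X) :
    ∃ K ∈ P, (K : Set X) = MulAction.orbit A x :=
  ⟨(Set.toFinite (MulAction.orbit A x)).toFinset, (hA _).2 ⟨x, by simp⟩, by simp⟩

variable [DecidableEq X]

theorem genByAut_of_forall_orbit_eq (A : Subgroup (MulAut X)) (P : Finset (Finset X))
    (hcover : ∀ x, ∃ K ∈ P, x ∈ K) (hne : ∀ K ∈ P, K.Nonempty)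
    (horbit : ∀ K ∈ P, ∀ x ∈ K, MulAction.orbit A x = K) : GenByAut P := by
  refine ⟨A, fun S => ⟨fun hS => ?_, ?_⟩⟩
  · obtain ⟨x, hx⟩ := hne S hS
    exact ⟨x, (horbit S hS x hx).symm⟩
  · rintro ⟨x, hS⟩
    obtain ⟨K, hK, hx⟩ := hcover x
    rwa [Finset.coe_injective (hS.trans (horbit K hK x hx))]

end OrbitPartition

section Restriction

variable {G : Type*} [Group G]

def restrictMulAut (A : Subgroup (MulAut G)) (H : Subgroup G)
    (hA : ∀ φ ∈ A, ∀ h ∈ H, φ h ∈ H) : A →* MulAut H where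
  toFun φ :=
    { toFun := fun h => ⟨(φ : MulAut G) h, hA φ φ.2 h h.2⟩
      invFun := fun h => ⟨(φ⁻¹ : MulAut G) h, hA _ (inv_mem φ.2) h h.2⟩
      left_inv := fun h => Subtype.ext (MulAut.inv_apply_self G φ h)
      right_inv := fun h => Subtype.ext (MulAut.apply_inv_self G φ h)
      map_mul' := fun h k => Subtype.ext (map_mul (φ : MulAut G) (h : G) k) }
  map_one' := rfl
  map_mul' _ _ := rfl

theorem mem_orbit_range_restrictMulAut_iff (A : Subgroup (MulAut G)) (H : Subgroup G)
    (hA : ∀ φ ∈ A, ∀ h ∈ H, φ h ∈ H) (h k : H) :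
    k ∈ MulAction.orbit (restrictMulAut A H hA).range h ↔
      (k : G) ∈ MulAction.orbit A (h : G) := by
  simp only [mem_orbit_mulAut_iff, MonoidHom.mem_range, exists_exists_eq_and, Subtype.ext_iff]
  exact ⟨fun ⟨φ, hφ⟩ => ⟨φ, φ.2, hφ⟩, fun ⟨φ, hφ, hk⟩ => ⟨⟨φ, hφ⟩, hk⟩⟩

variable [DecidableEq G]

-- The orbits of `A` through `H` lie in `H`, so `A` restricts to automorphisms of `H`.
theorem genByAut_of_image_eq_orbit (H : Subgroup G) [Fintype H] (A : Subgroup (MulAut G))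
    (PH : Finset (Finset H)) (hcover : ∀ h : H, ∃ K ∈ PH, h ∈ K)
    (horbit : ∀ K ∈ PH, ∃ g : G, Subtype.val '' (K : Set H) = MulAction.orbit A g) :
    GenByAut PH := by
  have horbit_mem : ∀ K ∈ PH, ∀ h ∈ K,
      MulAction.orbit A (h : G) = Subtype.val '' (K : Set H) := by
    intro K hK h hh
    obtain ⟨g, hg⟩ := horbit K hK
    rw [hg]
    exact MulAction.orbit_eq_iff.2 (hg ▸ ⟨h, hh, rfl⟩)
  have hA : ∀ φ ∈ A, ∀ h ∈ H, φ h ∈ H := by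
    intro φ hφ h hh
    obtain ⟨K, hK, hhK⟩ := hcover ⟨h, hh⟩
    have : φ h ∈ MulAction.orbit A h := (mem_orbit_mulAut_iff A _ _).2 ⟨φ, hφ, rfl⟩
    rw [horbit_mem K hK _ hhK] at this
    obtain ⟨k, -, hk⟩ := this
    exact hk ▸ k.2
  refine genByAut_of_forall_orbit_eq (restrictMulAut A H hA).range PH hcover
    (fun K hK => ?_) (fun K hK h hh => ?_)
  · obtain ⟨g, hg⟩ := horbit K hK
    obtain ⟨k, hk, -⟩ := (hg ▸ MulAction.mem_orbit_self g : g ∈ Subtype.val '' (K : Set H))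
    exact ⟨k, hk⟩
  · ext k
    rw [mem_orbit_range_restrictMulAut_iff A H hA, horbit_mem K hK h hh,
      Subtype.val_injective.mem_set_image, Finset.mem_coe]

end Restriction

section Product

variable {H N : Type*} [Group H] [Group N]

def prodMulAutHom : MulAut H × MulAut N →* MulAut (H × N) where
  toFun p := p.1.prodCongr p.2
  map_one' := rfl
  map_mul' _ _ := rfl

theorem orbit_map_prodMulAutHom (AH : Subgroup (MulAut H)) (AN : Subgroup (MulAut N))
    (h : H) (n : N) :
    MulAction.orbit ((AH.prod AN).map prodMulAutHom) (h, n) =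
      MulAction.orbit AH h ×ˢ MulAction.orbit AN n := by
  ext ⟨x, y⟩
  simp only [mem_orbit_mulAut_iff, Subgroup.mem_map, Set.mem_prod]
  constructor
  · rintro ⟨-, ⟨⟨α, β⟩, ⟨hα, hβ⟩, rfl⟩, hxy⟩
    exact ⟨⟨α, hα, congrArg Prod.fst hxy⟩, ⟨β, hβ, congrArg Prod.snd hxy⟩⟩
  · rintro ⟨⟨α, hα, rfl⟩, ⟨β, hβ, rfl⟩⟩
    exact ⟨_, ⟨(α, β), ⟨hα, hβ⟩, rfl⟩, rfl⟩

variable [Fintype H] [DecidableEq H] [Fintype N] [DecidableEq N]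

theorem GenByAut.prod {PH : Finset (Finset H)} {PN : Finset (Finset N)}
    (hPH : GenByAut PH) (hPN : GenByAut PN) :
    GenByAut ((PH ×ˢ PN).image fun q => q.1 ×ˢ q.2) := by
  obtain ⟨AH, hAH⟩ := hPH
  obtain ⟨AN, hAN⟩ := hPN
  refine ⟨(AH.prod AN).map prodMulAutHom, fun S => ?_⟩
  simp only [Finset.mem_image, Finset.mem_product, Prod.exists, orbit_map_prodMulAutHom]
  constructor
  · rintro ⟨K, L, ⟨hK, hL⟩, rfl⟩
    obtain ⟨h, hh⟩ := (hAH K).1 hK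
    obtain ⟨n, hn⟩ := (hAN L).1 hL
    exact ⟨h, n, by rw [Finset.coe_product, hh, hn]⟩
  · rintro ⟨h, n, hS⟩
    obtain ⟨K, hK, hh⟩ := exists_mem_coe_eq_orbit hAH h
    obtain ⟨L, hL, hn⟩ := exists_mem_coe_eq_orbit hAN n
    exact ⟨K, L, ⟨hK, hL⟩, Finset.coe_injective (by rw [Finset.coe_product, hh, hn, hS])⟩

end Product

section Transport

variable {X Y : Type*} [Group X] [Group Y]

theorem orbit_map_mulAutCongr (e : X ≃* Y) (A : Subgroup (MulAut X)) (x : X) :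
    MulAction.orbit (A.map (MulAut.congr e).toMonoidHom) (e x) = e '' MulAction.orbit A x := by
  ext y
  simp only [mem_orbit_mulAut_iff, Subgroup.mem_map, Set.mem_image]
  constructor
  · rintro ⟨-, ⟨φ, hφ, rfl⟩, rfl⟩
    exact ⟨φ x, ⟨φ, hφ, rfl⟩, by simp⟩
  · rintro ⟨-, ⟨φ, hφ, rfl⟩, rfl⟩
    exact ⟨_, ⟨φ, hφ, rfl⟩, by simp⟩

variable [Fintype X] [DecidableEq X] [Fintype Y] [DecidableEq Y]

theorem GenByAut.image_mulEquiv {P : Finset (Finset X)} (hP : GenByAut P) (e : X ≃* Y) :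
    GenByAut (P.image fun S => S.image e) := by
  obtain ⟨A, hA⟩ := hP
  refine ⟨A.map (MulAut.congr e).toMonoidHom, fun S => ?_⟩
  simp only [Finset.mem_image, e.surjective.exists, orbit_map_mulAutCongr]
  constructor
  · rintro ⟨T, hT, rfl⟩
    obtain ⟨x, hx⟩ := (hA T).1 hT
    exact ⟨x, by rw [Finset.coe_image, hx]⟩
  · rintro ⟨x, hS⟩
    obtain ⟨T, hT, hx⟩ := exists_mem_coe_eq_orbit hA x
    exact ⟨T, hT, Finset.coe_injective (by rw [Finset.coe_image, hx, hS])⟩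

end Transport

namespace Subgroup.IsComplement'

variable {G : Type*} [Group G] {H N : Subgroup G} [H.Normal] [N.Normal]

noncomputable def prodMulEquiv (hHN : H.IsComplement' N) : H × N ≃* G :=
  MulEquiv.ofBijective (H.subtype.noncommCoprod N.subtype fun h n =>
    commute_of_normal_of_disjoint H N ‹_› ‹_› hHN.disjoint h n h.2 n.2) hHN

end Subgroup.IsComplement'

/-- let `H, N` be a complementary pair of normal subgroups of a finite
group `G`, and let `P` be the direct product supercharacter theory of supercharacter
theories `P_H` of `H` and `P_N` of `N` (superclasses `K·L` for `K ∈ P_H`, `L ∈ P_N`).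
Then `P` is generated by a subgroup of `Aut(G)` iff `P_H` is generated by a subgroup of
`Aut(H)` and `P_N` is generated by a subgroup of `Aut(N)`. -/
theorem stmt16 {G : Type*} [Group G] [Fintype G] [DecidableEq G]
    (H N : Subgroup G) [H.Normal] [N.Normal] [Fintype H] [Fintype N] (hinf : H ⊓ N = ⊥) (hsup : H ⊔ N = ⊤)
    (PH : Finset (Finset H)) (PN : Finset (Finset N))
    (hPH : IsSCT PH) (hPN : IsSCT PN)
    (P : Finset (Finset G))
    (hP : P = (PH ×ˢ PN).image (fun q =>
      (q.1 ×ˢ q.2).image (fun x : H × N => (x.1 : G) * (x.2 : G)))) :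
    GenByAut P ↔ GenByAut PH ∧ GenByAut PN := by
  subst hP
  constructor
  · rintro ⟨A, hA⟩
    have horbit : ∀ K ∈ PH, ∀ L ∈ PN, ∃ g,
        (((K ×ˢ L).image fun x : H × N => (x.1 : G) * x.2 : Finset G) : Set G) =
          MulAction.orbit A g :=
      fun K hK L hL =>
        (hA _).1 (Finset.mem_image.2 ⟨(K, L), Finset.mem_product.2 ⟨hK, hL⟩, rfl⟩)
    refine ⟨genByAut_of_image_eq_orbit H A PH (fun h => (hPH.1 h).exists) fun K hK => ?_,
      genByAut_of_image_eq_orbit N A PN (fun n => (hPN.1 n).exists) fun L hL => ?_⟩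
    · simpa [Set.image_image] using horbit K hK {1} hPN.2.1
    · simpa [Set.image_image] using horbit {1} hPH.2.1 L hL
  · rintro ⟨hH, hN⟩
    have hHN : H.IsComplement' N := Subgroup.isComplement'_of_disjoint_and_mul_eq_univ
      (disjoint_iff.2 hinf) (by rw [← Subgroup.mul_normal, hsup, Subgroup.coe_top])
    have hprod := (hH.prod hN).image_mulEquiv hHN.prodMulEquiv
    -- `hHN.prodMulEquiv (h, n)` is `h * n` by definition.
    rwa [Finset.image_image] at hprod
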